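/- Let f : ℕ → ℝ≥0 be a function such that for all r, s ∈ ℕ with f(r) > 0 one has f(r+s) ≥ f(s). Then for any real k > 0, the function g(r) := limsup_{m → ∞} f(mr)/m^k satisfies g(cr) = c^k · g(r) for all positive integers c and r. -/

import Mathlib

/-!
With `u n = f n / n ^ k`, rescaling gives `g (c * r) = c ^ k * limsup_m u_r (c * m)` where
`u_r n = f (n * r) / n ^ k`, so it suffices that the limsup of `u_r` along the multiples of `c`
is its full limsup. One inequality is trivial. For the other, the shifts `x` with
`f (x + ·) ≥ f` form an additive submonoid of `ℕ` containing every `x` with `f x > 0`; one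
representative of each of its residue classes mod `c` yields a bound `B` such that every `n`
with `f n > 0` moves to a multiple `N` of `c` with `n ≤ N ≤ n + B` and `f n ≤ f N`. Then
`u n ≤ (N / n) ^ k * u N` and `N / n → 1`.
-/

open Filter ENNReal Topology

theorem AddSubmonoid.exists_le_dvd_add_of_mem (T : AddSubmonoid ℕ) {c : ℕ} (hc : 0 < c) :
    ∃ B, ∀ n ∈ T, ∃ x ∈ T, x ≤ B ∧ c ∣ n + x := by
  have residue_rep : ∀ ρ, ∃ w, (∃ q ∈ T, q % c = ρ) → w ∈ T ∧ w % c = ρ := by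
    intro ρ
    by_cases h : ∃ q ∈ T, q % c = ρ
    · obtain ⟨q, hqT, hqρ⟩ := h
      exact ⟨q, fun _ => ⟨hqT, hqρ⟩⟩
    · exact ⟨0, fun h' => absurd h' h⟩
  choose w hw using residue_rep
  refine ⟨(c - 1) * (Finset.range c).sup w, fun n hn => ?_⟩
  obtain ⟨hwT, hwn⟩ := hw (n % c) ⟨n, hn, rfl⟩
  refine ⟨(c - 1) * w (n % c), by simpa using nsmul_mem hwT (c - 1), ?_, ?_⟩
  · gcongr
    exact Finset.le_sup (Finset.mem_range.2 (Nat.mod_lt n hc))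
  -- `(c - 1) * w ≡ (c - 1) * n ≡ -n` modulo `c`
  have hcn : n + (c - 1) * n = c * n := by
    obtain ⟨d, rfl⟩ := Nat.exists_eq_add_of_lt hc
    simp only [Nat.zero_add, Nat.add_sub_cancel]
    ring
  refine (Nat.modEq_zero_iff_dvd).1 ?_
  calc n + (c - 1) * w (n % c) ≡ n + (c - 1) * n [MOD c] := (Nat.ModEq.mul_left _ hwn).add_left n
    _ = c * n := hcn
    _ ≡ 0 [MOD c] := (Nat.modEq_zero_iff_dvd).2 (dvd_mul_right c n)

def monotoneShifts {α : Type*} [Preorder α] (f : ℕ → α) : AddSubmonoid ℕ where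
  carrier := {x | ∀ n, f n ≤ f (x + n)}
  zero_mem' n := by rw [zero_add]
  add_mem' {a b} ha hb n := by
    rw [add_assoc]
    exact (hb n).trans (ha (b + n))

theorem exists_bound_nearby_multiple_le {f : ℕ → ℝ}
    (hsup : ∀ r s : ℕ, 0 < f r → f s ≤ f (r + s)) {c : ℕ} (hc : 0 < c) :
    ∃ B, ∀ n, ∃ m, n ≤ c * m ∧ c * m ≤ n + B ∧ (0 < f n → f n ≤ f (c * m)) := by
  obtain ⟨B, hB⟩ := (monotoneShifts f).exists_le_dvd_add_of_mem hc
  refine ⟨B + c, fun n => ?_⟩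
  by_cases hfn : 0 < f n
  · obtain ⟨x, hxT, hxB, m, hm⟩ := hB n fun s => hsup n s hfn
    refine ⟨m, by omega, by omega, fun _ => ?_⟩
    rw [← hm, add_comm]
    exact hxT n
  · have hdiv := Nat.div_add_mod n c
    have hmod := Nat.mod_lt n hc
    exact ⟨n / c + 1, by rw [mul_add]; omega, by rw [mul_add]; omega, fun h => absurd h hfn⟩

theorem Real.div_rpow_le_mul_div_rpow {a b x y k : ℝ} (hx : 0 < x) (hy : 0 < y) (hab : a ≤ b) :
    a / x ^ k ≤ (y / x) ^ k * (b / y ^ k) := by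
  have hxk := Real.rpow_pos_of_pos hx k
  have hyk := Real.rpow_pos_of_pos hy k
  calc a / x ^ k = (y / x) ^ k * (a / y ^ k) := by
        rw [Real.div_rpow hy.le hx.le]; field_simp
    _ ≤ (y / x) ^ k * (b / y ^ k) := by gcongr

theorem ENNReal.ofReal_div_rpow_le {a b x y k : ℝ} (hx : 0 < x) (hy : 0 < y)
    (hab : 0 < a → a ≤ b) :
    ENNReal.ofReal (a / x ^ k) ≤
      ENNReal.ofReal ((y / x) ^ k) * ENNReal.ofReal (b / y ^ k) := by
  rcases lt_or_ge 0 a with ha | ha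
  · rw [← ENNReal.ofReal_mul (by positivity)]
    exact ENNReal.ofReal_le_ofReal (Real.div_rpow_le_mul_div_rpow hx hy (hab ha))
  · rw [ENNReal.ofReal_of_nonpos (div_nonpos_of_nonpos_of_nonneg ha (by positivity))]
    exact zero_le

theorem ENNReal.limsup_le_limsup_of_le_mul_comp {α β : Type*} {l : Filter α} [l.NeBot]
    {l' : Filter β} {u φ : α → ℝ≥0∞} {v : β → ℝ≥0∞} {h : α → β}
    (hh : Tendsto h l l') (hφ : Tendsto φ l (𝓝 1)) (huv : ∀ᶠ n in l, u n ≤ φ n * v (h n)) :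
    limsup u l ≤ limsup v l' :=
  calc limsup u l ≤ limsup (φ * (v ∘ h)) l := limsup_le_limsup huv
    _ ≤ limsup φ l * limsup (v ∘ h) l := by
        refine ENNReal.limsup_mul_le' ?_ ?_ <;> rw [hφ.limsup_eq] <;> simp
    _ = limsup (v ∘ h) l := by rw [hφ.limsup_eq, one_mul]
    _ ≤ limsup v l' := limsup_le_limsup_of_le hh

theorem tendsto_natCast_div_of_le_of_le_add {N : ℕ → ℕ} {B : ℕ} (hle : ∀ n, n ≤ N n)
    (hB : ∀ n, N n ≤ n + B) : Tendsto (fun n => (N n : ℝ) / n) atTop (𝓝 1) := by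
  have hupper : Tendsto (fun n : ℕ => 1 + (B : ℝ) / n) atTop (𝓝 1) := by
    simpa using (tendsto_const_div_atTop_nhds_zero_nat (B : ℝ)).const_add 1
  refine tendsto_of_tendsto_of_tendsto_of_le_of_le' tendsto_const_nhds hupper ?_ ?_ <;>
    filter_upwards [eventually_gt_atTop 0] with n hn
  · rw [le_div_iff₀ (by positivity), one_mul]; exact_mod_cast hle n
  · rw [div_le_iff₀ (by positivity), add_mul, one_mul, div_mul_cancel₀ _ (by positivity)]
    exact_mod_cast hB n

theorem limsup_ofReal_div_rpow_comp_mul_left {f : ℕ → ℝ}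
    (hsup : ∀ r s : ℕ, 0 < f r → f s ≤ f (r + s)) (k : ℝ) {c : ℕ} (hc : 0 < c) :
    limsup (fun m : ℕ => ENNReal.ofReal (f (c * m) / (c * m : ℕ) ^ k)) atTop =
      limsup (fun n : ℕ => ENNReal.ofReal (f n / (n : ℝ) ^ k)) atTop := by
  set u : ℕ → ℝ≥0∞ := fun n => ENNReal.ofReal (f n / (n : ℝ) ^ k)
  have hmul : Tendsto (c * ·) atTop atTop := tendsto_id.const_mul_atTop' hc
  refine le_antisymm ((limsup_comp u _ _).trans_le (limsup_le_limsup_of_le hmul)) ?_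
  obtain ⟨B, hB⟩ := exists_bound_nearby_multiple_le hsup hc
  choose m hnm hmB hfm using hB
  have hm : Tendsto m atTop atTop :=
    tendsto_atTop_mono (fun n => Nat.div_le_of_le_mul (hnm n)) (Nat.tendsto_div_const_atTop hc.ne')
  have hratio := tendsto_natCast_div_of_le_of_le_add hnm hmB
  refine ENNReal.limsup_le_limsup_of_le_mul_comp hm
    (φ := fun n => ENNReal.ofReal (((c * m n : ℕ) / n : ℝ) ^ k)) ?_ ?_
  · simpa using ENNReal.tendsto_ofReal (hratio.rpow_const (Or.inl one_ne_zero))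
  · filter_upwards [eventually_gt_atTop 0] with n hn
    exact ENNReal.ofReal_div_rpow_le (by exact_mod_cast hn)
      (by exact_mod_cast hn.trans_le (hnm n)) (hfm n)

theorem limsup_rate_homogeneous_general (f : ℕ → ℝ)
    (hsup : ∀ r s : ℕ, 0 < f r → f s ≤ f (r + s))
    (k : ℝ)
    (g : ℕ → ℝ≥0∞)
    (hg : ∀ r : ℕ, g r =
      Filter.limsup (fun m : ℕ => ENNReal.ofReal (f (m * r) / (m : ℝ) ^ k)) Filter.atTop) :
    ∀ c r : ℕ, 0 < c → 0 < r → g (c * r) = ENNReal.ofReal ((c : ℝ) ^ k) * g r := by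
  intro c r hc _
  have hsup_r : ∀ p q : ℕ, 0 < f (p * r) → f (q * r) ≤ f ((p + q) * r) := fun p q hp => by
    simpa only [add_mul] using hsup (p * r) (q * r) hp
  have hc' : (0 : ℝ) < c := by exact_mod_cast hc
  have rescale : ∀ᶠ m : ℕ in atTop, ENNReal.ofReal (f (m * (c * r)) / (m : ℝ) ^ k) =
      ENNReal.ofReal ((c : ℝ) ^ k) * ENNReal.ofReal (f ((c * m) * r) / (c * m : ℕ) ^ k) := by
    filter_upwards [eventually_gt_atTop 0] with m hm
    have hm' : (0 : ℝ) < m := by exact_mod_cast hm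
    rw [← ENNReal.ofReal_mul (by positivity), Nat.cast_mul, Real.mul_rpow hc'.le hm'.le,
      mul_comm c m, mul_assoc]
    field_simp
  rw [hg, hg, limsup_congr rescale, ENNReal.limsup_const_mul_of_ne_top ofReal_ne_top,
    limsup_ofReal_div_rpow_comp_mul_left hsup_r k hc]

theorem limsup_rate_homogeneous (f : ℕ → ℝ) (hf : ∀ n, 0 ≤ f n)
    (hsup : ∀ r s : ℕ, 0 < f r → f s ≤ f (r + s))
    (k : ℝ) (hk : 0 < k)
    (g : ℕ → ℝ≥0∞)
    (hg : ∀ r : ℕ, g r =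
      Filter.limsup (fun m : ℕ => ENNReal.ofReal (f (m * r) / (m : ℝ) ^ k)) Filter.atTop) :
    ∀ c r : ℕ, 0 < c → 0 < r → g (c * r) = ENNReal.ofReal ((c : ℝ) ^ k) * g r :=
  limsup_rate_homogeneous_general f hsup k g hg
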